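/- Let N ∈ ℕ, let φ_1, …, φ_N : ℕ → ℤ be strongly asymptotically independent sequences, and let t ∈ ℕ. Then the set 𝔐_t(φ_1,…,φ_N) consisting of all (α_1, …, α_t) ∈ ℝ^t such that the ℝ^{Nt}-valued sequence (φ_1(k)α_1, …, φ_N(k)α_1, …, φ_1(k)α_t, …, φ_N(k)α_t)_{k∈ℕ} is uniformly distributed mod 1 has full Lebesgue measure in ℝ^t, i.e. its complement is Lebesgue null. -/

import Mathlib

open Filter Topology MeasureTheory

noncomputable section

/-- `φ_1,…,φ_N : ℕ → ℤ` are strongly asymptotically independent: every nontrivial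
integer linear combination of them is eventually strictly monotone. -/
def StronglyAsympIndep (N : ℕ) (φ : Fin N → ℕ → ℤ) : Prop :=
  ∀ a : Fin N → ℤ, a ≠ 0 → ∃ K : ℕ,
    StrictMonoOn (fun k => ∑ j, a j * φ j k) (Set.Ici K) ∨
    StrictAntiOn (fun k => ∑ j, a j * φ j k) (Set.Ici K)

/-- A sequence `x : ℕ → ℝ^ι` is uniformly distributed mod 1 (via Weyl's criterion):
for every nonzero `a ∈ ℤ^ι`, `(1/M) Σ_{k=1}^M e^{2πi⟨a, x_k⟩} → 0`. -/
def UDMod1 {ι : Type*} [Fintype ι] (x : ℕ → ι → ℝ) : Prop :=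
  ∀ a : ι → ℤ, a ≠ 0 →
    Tendsto (fun M : ℕ => (M : ℂ)⁻¹ *
        ∑ k ∈ Finset.Icc 1 M,
          Complex.exp (2 * Real.pi * Complex.I * (∑ i, (a i : ℂ) * (x k i : ℂ))))
      atTop (𝓝 0)

/-! For a nonzero frequency `a`, the Weyl sum of `(φ_j(k) α_i)` is `Σ_k e(⟨ψ_k, α⟩)` with
`ψ_k(i) = Σ_j a(i,j) φ_j(k) ∈ ℤ^t`, and strong asymptotic independence makes `k ↦ ψ_k` injective
from some `K` on. By orthogonality of the characters `e(⟨c, ·⟩)` on a unit cube, the mean square of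
the `M`-th Weyl average over the cube is the proportion of coincidences `ψ_k = ψ_l` in `[1, M]²`,
at most `(K + 1) / M`. Along `M = m²` these bounds are summable, so the averages along the squares
tend to `0` almost everywhere; as the summands have modulus `1`, the gaps between consecutive
squares are negligible and this passes to all `M`. Countably many unit cubes cover `ℝ^t`, and there
are countably many frequencies. -/

def expIntDot {ι : Type*} [Fintype ι] (c : ι → ℤ) (α : ι → ℝ) : ℂ :=
  Complex.exp (2 * Real.pi * Complex.I * ∑ i, (c i : ℂ) * (α i : ℂ))

def unitCube {ι : Type*} (v : ι → ℝ) : Set (ι → ℝ) :=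
  Set.univ.pi fun i => Set.Icc (v i) (v i + 1)

def cesaroAvg (u : ℕ → ℂ) (M : ℕ) : ℂ :=
  (M : ℂ)⁻¹ * ∑ k ∈ Finset.Icc 1 M, u k

open Complex in
theorem integral_Icc_exp_two_pi_int_mul (a : ℝ) (n : ℤ) :
    ∫ x in Set.Icc a (a + 1), exp (2 * Real.pi * I * n * x) = if n = 0 then 1 else 0 := by
  rw [integral_Icc_eq_integral_Ioc, ← intervalIntegral.integral_of_le (by linarith)]
  split_ifs with hn
  · simp [hn]
  · have hc : 2 * (Real.pi : ℂ) * I * n ≠ 0 := by simp [Real.pi_ne_zero, hn]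
    have hperiod : exp (2 * Real.pi * I * n) = 1 := by
      simpa [mul_comm, mul_assoc, mul_left_comm] using exp_int_mul_two_pi_mul_I n
    rw [integral_exp_mul_complex hc]
    push_cast
    rw [mul_add, mul_one, exp_add, hperiod, mul_one, sub_self, zero_div]

theorem setIntegral_univ_pi_prod {ι 𝕜 : Type*} [Fintype ι] [RCLike 𝕜] {E : ι → Type*}
    [∀ i, MeasurableSpace (E i)] (μ : (i : ι) → Measure (E i)) [∀ i, SigmaFinite (μ i)]
    (s : (i : ι) → Set (E i)) (f : (i : ι) → E i → 𝕜) :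
    ∫ x in Set.univ.pi s, ∏ i, f i (x i) ∂Measure.pi μ = ∏ i, ∫ y in s i, f i y ∂μ i := by
  rw [Measure.restrict_pi_pi, integral_fintype_prod_eq_prod]

theorem isCompact_unitCube {ι : Type*} (v : ι → ℝ) : IsCompact (unitCube v) :=
  isCompact_univ_pi fun _ => isCompact_Icc

theorem ae_tendsto_zero_of_summable_integral {X : Type*} [MeasurableSpace X] {μ : Measure X}
    {f : ℕ → X → ℝ} (hf_nonneg : ∀ n x, 0 ≤ f n x) (hf_int : ∀ n, Integrable (f n) μ)
    (hsum : Summable fun n => ∫ x, f n x ∂μ) :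
    ∀ᵐ x ∂μ, Tendsto (fun n => f n x) atTop (𝓝 0) := by
  have hmeas (n : ℕ) : AEMeasurable (fun x => ENNReal.ofReal (f n x)) μ :=
    (hf_int n).aemeasurable.ennreal_ofReal
  have hfinite : ∫⁻ x, ∑' n, ENNReal.ofReal (f n x) ∂μ ≠ ⊤ := by
    rw [lintegral_tsum hmeas]
    simp_rw [← ofReal_integral_eq_lintegral_ofReal (hf_int _) (ae_of_all _ (hf_nonneg _))]
    rw [← ENNReal.ofReal_tsum_of_nonneg (fun n => integral_nonneg (hf_nonneg n)) hsum]
    exact ENNReal.ofReal_ne_top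
  filter_upwards [ae_lt_top' (AEMeasurable.tsum hmeas) hfinite] with x hx
  have := (ENNReal.tendsto_toReal ENNReal.zero_ne_top).comp
    (ENNReal.tendsto_atTop_zero_of_tsum_ne_top hx.ne)
  simpa [Function.comp_def, ENNReal.toReal_ofReal (hf_nonneg _ x)] using this

theorem norm_cesaroAvg_le {u : ℕ → ℂ} (hu : ∀ k, ‖u k‖ ≤ 1) (M : ℕ) :
    ‖cesaroAvg u M‖ ≤ ‖cesaroAvg u (Nat.sqrt M ^ 2)‖ + 2 / Nat.sqrt M := by
  rcases M.eq_zero_or_pos with rfl | hM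
  · simp [cesaroAvg]
  set m := Nat.sqrt M
  have hmM : m ^ 2 ≤ M := Nat.sqrt_le' M
  have hMm : M ≤ m ^ 2 + 2 * m := by nlinarith [Nat.lt_succ_sqrt' M]
  have htail : ‖∑ k ∈ Finset.Icc 1 M, u k - ∑ k ∈ Finset.Icc 1 (m ^ 2), u k‖ ≤ 2 * m := by
    rw [← Finset.sum_sdiff_eq_sub (Finset.Icc_subset_Icc le_rfl hmM)]
    refine (norm_sum_le_of_le _ fun k _ => hu k).trans ?_
    rw [Finset.sum_const, nsmul_one, Finset.card_sdiff_of_subset (Finset.Icc_subset_Icc le_rfl hmM),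
      Nat.card_Icc, Nat.card_Icc]
    exact_mod_cast (by omega : M + 1 - 1 - (m ^ 2 + 1 - 1) ≤ 2 * m)
  have hmMR : (m : ℝ) ^ 2 ≤ M := by exact_mod_cast hmM
  simp only [cesaroAvg, norm_mul, norm_inv, Complex.norm_natCast]
  push_cast
  calc (M : ℝ)⁻¹ * ‖∑ k ∈ Finset.Icc 1 M, u k‖
      ≤ (M : ℝ)⁻¹ * (‖∑ k ∈ Finset.Icc 1 (m ^ 2), u k‖ + 2 * m) := by
        gcongr
        exact norm_le_norm_add_norm_sub' _ _ |>.trans (by linarith)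
    _ ≤ ((m : ℝ) ^ 2)⁻¹ * (‖∑ k ∈ Finset.Icc 1 (m ^ 2), u k‖ + 2 * m) := by
        gcongr
    _ = _ := by field_simp

theorem tendsto_cesaroAvg_of_tendsto_sq {u : ℕ → ℂ} (hu : ∀ k, ‖u k‖ ≤ 1)
    (h : Tendsto (fun m => cesaroAvg u (m ^ 2)) atTop (𝓝 0)) :
    Tendsto (cesaroAvg u) atTop (𝓝 0) := by
  have hsqrt : Tendsto Nat.sqrt atTop atTop :=
    tendsto_atTop_atTop.2 fun b => ⟨b * b, fun _ => Nat.le_sqrt.2⟩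
  have hbound : Tendsto (fun M => ‖cesaroAvg u (Nat.sqrt M ^ 2)‖ + 2 / (Nat.sqrt M : ℝ))
      atTop (𝓝 0) := by
    simpa [Function.comp_def] using ((tendsto_norm_zero.comp h).add
      (tendsto_const_nhds.div_atTop tendsto_natCast_atTop_atTop)).comp hsqrt
  exact squeeze_zero_norm (norm_cesaroAvg_le hu) hbound

theorem card_filter_eq_le_of_injOn {β : Type*} [DecidableEq β] {ψ : ℕ → β} {K : ℕ}
    (hψ : Set.InjOn ψ (Set.Ici K)) (s : Finset ℕ) (b : β) :
    (s.filter fun l => b = ψ l).card ≤ K + 1 := by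
  have hsub : s.filter (fun l => b = ψ l) ⊆
      Finset.range K ∪ s.filter (fun l => K ≤ l ∧ b = ψ l) := by
    intro l hl
    rw [Finset.mem_filter] at hl
    by_cases hlK : l < K
    · exact Finset.mem_union_left _ (Finset.mem_range.2 hlK)
    · exact Finset.mem_union_right _ (Finset.mem_filter.2 ⟨hl.1, not_lt.1 hlK, hl.2⟩)
  have hle_one : (s.filter fun l => K ≤ l ∧ b = ψ l).card ≤ 1 := by
    refine Finset.card_le_one.2 fun l hl l' hl' => ?_
    rw [Finset.mem_filter] at hl hl'
    exact hψ hl.2.1 hl'.2.1 (hl.2.2.symm.trans hl'.2.2)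
  calc _ ≤ _ := Finset.card_le_card hsub
    _ ≤ K + 1 := (Finset.card_union_le _ _).trans (by rw [Finset.card_range]; omega)

section expIntDot

variable {ι : Type*} [Fintype ι]

open Complex ComplexConjugate

theorem expIntDot_eq_prod (c : ι → ℤ) (α : ι → ℝ) :
    expIntDot c α = ∏ i, exp (2 * Real.pi * I * c i * α i) := by
  rw [expIntDot, Finset.mul_sum, exp_sum]
  simp only [mul_assoc]

theorem expIntDot_mul_conj (c d : ι → ℤ) (α : ι → ℝ) :
    expIntDot c α * conj (expIntDot d α) = expIntDot (c - d) α := by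
  simp only [expIntDot, ← exp_conj, ← exp_add, map_mul, map_sum, conj_I, map_intCast,
    conj_ofReal, map_ofNat, Pi.sub_apply, Int.cast_sub, sub_mul, Finset.sum_sub_distrib]
  ring_nf

theorem norm_expIntDot (c : ι → ℤ) (α : ι → ℝ) : ‖expIntDot c α‖ = 1 := by
  have : 2 * Real.pi * I * ∑ i, (c i : ℂ) * (α i : ℂ) =
      ((2 * Real.pi * ∑ i, (c i : ℝ) * α i : ℝ) : ℂ) * I := by
    push_cast; ring
  rw [expIntDot, this, norm_exp_ofReal_mul_I]

theorem continuous_expIntDot (c : ι → ℤ) : Continuous (expIntDot c) := by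
  unfold expIntDot
  fun_prop

theorem integral_unitCube_expIntDot (v : ι → ℝ) (c : ι → ℤ) :
    ∫ α in unitCube v, expIntDot c α = if c = 0 then 1 else 0 := by
  simp_rw [expIntDot_eq_prod]
  rw [unitCube, volume_pi,
    setIntegral_univ_pi_prod _ _ fun i (x : ℝ) => exp (2 * Real.pi * I * c i * x)]
  simp_rw [integral_Icc_exp_two_pi_int_mul]
  split_ifs with hc
  · simp [hc]
  · obtain ⟨i, hi⟩ := Function.ne_iff.mp hc
    exact Finset.prod_eq_zero (Finset.mem_univ i) (if_neg hi)

theorem integrableOn_unitCube_expIntDot (v : ι → ℝ) (c : ι → ℤ) :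
    IntegrableOn (expIntDot c) (unitCube v) :=
  (continuous_expIntDot c).continuousOn.integrableOn_compact (isCompact_unitCube v)

theorem integral_unitCube_norm_sum_expIntDot_sq {κ : Type*} (v : ι → ℝ) (ψ : κ → ι → ℤ)
    (s : Finset κ) :
    ∫ α in unitCube v, ‖∑ k ∈ s, expIntDot (ψ k) α‖ ^ 2 =
      ∑ k ∈ s, ((s.filter fun l => ψ k = ψ l).card : ℝ) := by
  have hpoint (α : ι → ℝ) : ((‖∑ k ∈ s, expIntDot (ψ k) α‖ ^ 2 : ℝ) : ℂ) =
      ∑ k ∈ s, ∑ l ∈ s, expIntDot (ψ k - ψ l) α := by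
    rw [Complex.ofReal_pow, ← Complex.mul_conj', map_sum, Finset.sum_mul_sum]
    simp only [expIntDot_mul_conj]
  apply Complex.ofReal_injective
  rw [← integral_complex_ofReal]
  simp_rw [hpoint]
  rw [integral_finsetSum _ fun k _ => integrable_finsetSum _ fun l _ =>
    integrableOn_unitCube_expIntDot v _]
  push_cast
  refine Finset.sum_congr rfl fun k _ => ?_
  rw [integral_finsetSum _ fun l _ => integrableOn_unitCube_expIntDot v _]
  simp_rw [integral_unitCube_expIntDot, sub_eq_zero, Finset.sum_boole]

theorem integral_unitCube_norm_cesaroAvg_sq_le (v : ι → ℝ) {ψ : ℕ → ι → ℤ} {K : ℕ}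
    (hψ : Set.InjOn ψ (Set.Ici K)) (M : ℕ) :
    ∫ α in unitCube v, ‖cesaroAvg (fun k => expIntDot (ψ k) α) M‖ ^ 2 ≤ ((K : ℝ) + 1) / M := by
  simp_rw [cesaroAvg, norm_mul, mul_pow, norm_inv, Complex.norm_natCast]
  rw [integral_const_mul, integral_unitCube_norm_sum_expIntDot_sq]
  calc _ ≤ ((M : ℝ)⁻¹) ^ 2 * ∑ _k ∈ Finset.Icc 1 M, ((K : ℝ) + 1) := by
        gcongr with k
        exact_mod_cast card_filter_eq_le_of_injOn hψ _ _
    _ = (K + 1) / M := by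
        rw [Finset.sum_const, Nat.card_Icc, nsmul_eq_mul, Nat.add_sub_cancel, inv_pow]
        rcases eq_or_ne (M : ℝ) 0 with hM | hM
        · simp [hM]
        · field_simp

theorem continuous_cesaroAvg_expIntDot (ψ : ℕ → ι → ℤ) (M : ℕ) :
    Continuous fun α => cesaroAvg (fun k => expIntDot (ψ k) α) M :=
  continuous_const.mul (continuous_finsetSum _ fun k _ => continuous_expIntDot (ψ k))

theorem ae_restrict_unitCube_tendsto_cesaroAvg_expIntDot (v : ι → ℝ) {ψ : ℕ → ι → ℤ} {K : ℕ}
    (hψ : Set.InjOn ψ (Set.Ici K)) :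
    ∀ᵐ α ∂volume.restrict (unitCube v),
      Tendsto (cesaroAvg fun k => expIntDot (ψ k) α) atTop (𝓝 0) := by
  set f : ℕ → (ι → ℝ) → ℝ := fun m α => ‖cesaroAvg (fun k => expIntDot (ψ k) α) (m ^ 2)‖ ^ 2
  have hint (m : ℕ) : IntegrableOn (f m) (unitCube v) :=
    ((continuous_cesaroAvg_expIntDot ψ _).norm.pow 2).continuousOn.integrableOn_compact
      (isCompact_unitCube v)
  have hdom : Summable fun m : ℕ => ((K : ℝ) + 1) / ((m ^ 2 : ℕ) : ℝ) :=
    ((Real.summable_one_div_nat_pow.2 one_lt_two).mul_left ((K : ℝ) + 1)).congr fun m => by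
      push_cast; ring
  have hsum : Summable fun m => ∫ α in unitCube v, f m α :=
    hdom.of_nonneg_of_le (fun m => integral_nonneg fun _ => by positivity)
      fun m => integral_unitCube_norm_cesaroAvg_sq_le v hψ (m ^ 2)
  filter_upwards [ae_tendsto_zero_of_summable_integral (fun _ _ => by positivity) hint hsum]
    with α hα
  refine tendsto_cesaroAvg_of_tendsto_sq (fun k => (norm_expIntDot _ _).le) ?_
  rw [tendsto_zero_iff_norm_tendsto_zero]
  simpa [f, Real.sqrt_sq (norm_nonneg _)] using hα.sqrt

theorem ae_tendsto_cesaroAvg_expIntDot {ψ : ℕ → ι → ℤ} {K : ℕ} (hψ : Set.InjOn ψ (Set.Ici K)) :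
    ∀ᵐ α, Tendsto (cesaroAvg fun k => expIntDot (ψ k) α) atTop (𝓝 0) := by
  have hcover : (⋃ v : ι → ℤ, unitCube fun i => (v i : ℝ)) = Set.univ :=
    Set.eq_univ_of_forall fun α => Set.mem_iUnion.2
      ⟨fun i => ⌊α i⌋, fun i _ => ⟨Int.floor_le _, (Int.lt_floor_add_one _).le⟩⟩
  rw [← Measure.restrict_univ (μ := volume), ← hcover, ae_restrict_iUnion_iff]
  exact fun v => ae_restrict_unitCube_tendsto_cesaroAvg_expIntDot _ hψ

theorem exp_two_pi_I_sum_prod_eq_expIntDot {κ : Type*} [Fintype κ] (a : ι × κ → ℤ)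
    (φ : κ → ℕ → ℤ) (k : ℕ) (α : ι → ℝ) :
    Complex.exp (2 * Real.pi * Complex.I *
        ∑ p : ι × κ, (a p : ℂ) * (((φ p.2 k : ℝ) * α p.1 : ℝ) : ℂ)) =
      expIntDot (fun i => ∑ j, a (i, j) * φ j k) α := by
  rw [expIntDot, Fintype.sum_prod_type]
  push_cast
  simp only [Finset.sum_mul]
  ring_nf

end expIntDot

theorem StronglyAsympIndep.exists_injOn {N : ℕ} {φ : Fin N → ℕ → ℤ} (hφ : StronglyAsympIndep N φ)
    {ι : Type*} {a : ι × Fin N → ℤ} (ha : a ≠ 0) :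
    ∃ K, Set.InjOn (fun k i => ∑ j, a (i, j) * φ j k) (Set.Ici K) := by
  obtain ⟨⟨i, j⟩, hij⟩ := Function.ne_iff.1 ha
  obtain ⟨K, hK⟩ := hφ (fun j => a (i, j)) (Function.ne_iff.2 ⟨j, hij⟩)
  refine ⟨K, Set.InjOn.of_comp (g := fun x => x i) ?_⟩
  rcases hK with hmono | hanti
  exacts [hmono.injOn, hanti.injOn]

/-- For strongly asymptotically independent `φ_1,…,φ_N` and any `t ∈ ℕ`,
the set `𝔐_t(φ_1,…,φ_N)` of `(α_1,…,α_t) ∈ ℝ^t` such that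
`(φ_1(k)α_1,…,φ_N(k)α_1,…,φ_1(k)α_t,…,φ_N(k)α_t)_k` is uniformly distributed mod 1
has full Lebesgue measure in `ℝ^t`. -/
theorem stmt_7 (N : ℕ) (φ : Fin N → ℕ → ℤ) (hφ : StronglyAsympIndep N φ) (t : ℕ) :
    volume {α : Fin t → ℝ |
      ¬ UDMod1 (fun k (p : Fin t × Fin N) => (φ p.2 k : ℝ) * α p.1)} = 0 := by
  refine ae_iff.1 (ae_all_iff.2 fun a => ?_)
  rcases eq_or_ne a 0 with rfl | ha
  · exact .of_forall fun _ h => absurd rfl h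
  obtain ⟨K, hK⟩ := hφ.exists_injOn ha
  filter_upwards [ae_tendsto_cesaroAvg_expIntDot hK] with α hα _
  simp only [exp_two_pi_I_sum_prod_eq_expIntDot]
  exact hα
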